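/- Fix a composition I = (i_1, …, i_r) of n with r ≥ 2 and set I^1 = (i_1+i_2, i_3, …, i_r). Let E_1 be the set of pairs (τ, x) where τ is a permutition of size n with c(τ) = I and x is one of the i_1 letters of the first block of τ (the block whose last letter is smallest); let E_2 be the set of permutitions τ of size n with c(τ) = I^1; let E_3 be the set of pairs (π, w) where π is a permutition of size n − i_1 with c(π) = (i_2, …, i_r) and w is a word of length i_1 with pairwise distinct letters from {1, …, n}. Then there exists a bijection φ from the disjoint union E_1 ⊔ E_2 onto the disjoint union E_1 ⊔ E_3 such that: (a) if (τ, x) ∈ E_1 and φ(τ, x) = (π, y) ∈ E_1, then sinv(π) = sinv(τ) + 1; (b) if (τ, x) ∈ E_1 and φ(τ, x) = (π, w) ∈ E_3, then sinv(π) = sinv(τ) − (i_1 − 1); (c) if τ ∈ E_2 and φ(τ) = (π, y) ∈ E_1, then sinv(π) = sinv(τ); (d) if τ ∈ E_2 and φ(τ) = (π, w) ∈ E_3, then sinv(π) = sinv(τ) − i_1. -/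

import Mathlib

/-- A permutition (set of lists) of size `n`, represented canonically: the list of
blocks, each block a nonempty list of distinct letters, the letters partitioning
`{1, …, n}`, and the blocks ordered by increasing value of their last letters. -/
def IsPermutition (n : ℕ) (L : List (List ℕ)) : Prop :=
  (∀ B ∈ L, B ≠ []) ∧ L.flatten.Nodup ∧
    (∀ x, x ∈ L.flatten ↔ 1 ≤ x ∧ x ≤ n) ∧
    List.Chain' (· < ·) (L.map fun B => B.getLastD 0)

/-- `c(π)`: the composition of `n` formed by the block sizes, blocks being ordered by
increasing last letter. -/
def shape (L : List (List ℕ)) : List ℕ := L.map List.length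

/-- `sinv(π)`: the number of letters strictly greater than the last letter of their block. -/
def sinv (L : List (List ℕ)) : ℕ :=
  (L.map fun B => B.countP fun x => decide (B.getLastD 0 < x)).sum

/-!
Cutting off the first `i₁` letters splits an element of `E₁`, `E₂` or `E₃` into a head word `w`
(carrying a marked letter in `E₁`) and the remaining blocks `M`, a permutition of the letters
outside `w` (standardised to `{1, …, n - i₁}` in `E₃`). The bijection keeps `M` and changes only
the head, relative to the last letter `u` of the first block of `M`. A marked block whose last
letter `a` is not its least letter swaps `a` with the next smaller letter of the block, which
raises `sinv` by one; when `a` is the least letter, the block is handed to `E₃` after swapping `a`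
with the mark. A bare word from `E₂` enters `E₁` by swapping its last letter with its largest
letter below `u`, if there is one, and is otherwise handed to `E₃` unchanged. The relations
(a)–(d) together say that `sinv τ + [τ ∈ E₁]` equals `sinv π + i₁ [π ∈ E₃]`, and each of these
moves changes the contribution of the head to `sinv` in exactly that way.
-/

theorem Set.BijOn.exists_sumEquiv {α β γ δ : Type*} {p : α → Prop} {q : β → Prop}
    {p' : γ → Prop} {q' : δ → Prop} {f : α ⊕ β → γ ⊕ δ}
    (hf : Set.BijOn f {e | Sum.elim p q e} {e | Sum.elim p' q' e}) :
    ∃ φ : {a // p a} ⊕ {b // q b} ≃ {c // p' c} ⊕ {d // q' d},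
      ∀ e, Sum.map (↑) (↑) (φ e) = f (Sum.map (↑) (↑) e) := by
  have hval : ∀ y : {e : γ ⊕ δ // Sum.elim p' q' e},
      Sum.map Subtype.val Subtype.val (Equiv.subtypeSum y) = y.1 := by
    rintro ⟨c | d, h⟩ <;> rfl
  exact ⟨Equiv.subtypeSum.symm.trans ((hf.equiv f).trans Equiv.subtypeSum),
    by rintro (a | b) <;> exact hval _⟩

namespace Permutition

open List

section Words

variable {w : List ℕ} {a b x : ℕ}

lemma getLastD_mem_of_ne_nil (hw : w ≠ []) : w.getLastD 0 ∈ w := by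
  rw [getLastD_eq_getLast?, getLast?_eq_some_getLast hw]
  exact getLast_mem hw

lemma getLastD_map_of_ne_nil {f : ℕ → ℕ} (hw : w ≠ []) :
    (w.map f).getLastD 0 = f (w.getLastD 0) := by
  rw [getLastD_eq_getLast?, getLastD_eq_getLast?, getLast?_map, getLast?_eq_some_getLast hw]
  rfl

lemma getLastD_append_of_ne_nil {v : List ℕ} (hw : w ≠ []) :
    (v ++ w).getLastD 0 = w.getLastD 0 := by
  rw [getLastD_eq_getLast?, getLastD_eq_getLast?, getLast?_append, getLast?_eq_some_getLast hw]
  rfl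

lemma swap_apply_mem_iff (ha : a ∈ w) (hb : b ∈ w) : Equiv.swap a b x ∈ w ↔ x ∈ w := by
  rw [Equiv.swap_apply_def]
  split_ifs <;> subst_vars <;> simp [ha, hb]

lemma mem_map_swap_iff (ha : a ∈ w) (hb : b ∈ w) : x ∈ w.map (Equiv.swap a b) ↔ x ∈ w := by
  rw [← swap_apply_mem_iff ha hb, ← Equiv.swap_apply_self a b x,
    mem_map_of_injective (Equiv.injective _), Equiv.swap_apply_self]

lemma perm_map_swap (hw : w.Nodup) (ha : a ∈ w) (hb : b ∈ w) : w.map (Equiv.swap a b) ~ w :=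
  (perm_ext_iff_of_nodup (hw.map (Equiv.injective _)) hw).2 fun _ => mem_map_swap_iff ha hb

lemma map_swap_map_swap : (w.map (Equiv.swap a b)).map (Equiv.swap a b) = w := by
  simp [Function.comp_def]

lemma max?_filter_eq_some_iff {p : ℕ → Prop} [DecidablePred p] {m : ℕ} :
    (w.filter (p ·)).max? = some m ↔ m ∈ w ∧ p m ∧ ∀ z ∈ w, p z → z ≤ m := by
  simp [max?_eq_some_iff, and_assoc]

lemma min?_filter_eq_some_iff {p : ℕ → Prop} [DecidablePred p] {m : ℕ} :
    (w.filter (p ·)).min? = some m ↔ m ∈ w ∧ p m ∧ ∀ z ∈ w, p z → m ≤ z := by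
  simp [min?_eq_some_iff, and_assoc]

lemma max?_filter_eq_none_iff {p : ℕ → Prop} [DecidablePred p] :
    (w.filter (p ·)).max? = none ↔ ∀ z ∈ w, ¬ p z := by
  simp [max?_eq_none_iff]

lemma min?_filter_eq_none_iff {p : ℕ → Prop} [DecidablePred p] :
    (w.filter (p ·)).min? = none ↔ ∀ z ∈ w, ¬ p z := by
  simp [min?_eq_none_iff]

end Words

def excess (u : ℕ) (w : List ℕ) : ℕ := w.countP (u < ·)

lemma excess_append (u : ℕ) (v w : List ℕ) : excess u (v ++ w) = excess u v + excess u w :=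
  countP_append

lemma sinv_cons (B : List ℕ) (M : List (List ℕ)) :
    sinv (B :: M) = excess (B.getLastD 0) B + sinv M := by
  simp [sinv, excess]

section Excess

variable {w : List ℕ} {a b s t : ℕ}

lemma excess_eq_card (hw : w.Nodup) : excess s w = (w.toFinset.filter (s < ·)).card := by
  rw [excess, countP_eq_length_filter, ← toFinset_card_of_nodup (hw.filter _), toFinset_filter]
  simp

lemma excess_map_swap (hw : w.Nodup) (ha : a ∈ w) (hb : b ∈ w) :
    excess s (w.map (Equiv.swap a b)) = excess s w :=
  (perm_map_swap hw ha hb).countP_eq _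

lemma excess_eq_excess_of_forall_notMem_Ioc (hst : s ≤ t) (h : ∀ z ∈ w, z ∉ Set.Ioc s t) :
    excess s w = excess t w :=
  countP_congr fun z hz => by
    have := h z hz
    simp only [Set.mem_Ioc, decide_eq_true_eq] at this ⊢
    omega

lemma excess_eq_length_of_forall_lt (h : ∀ z ∈ w, s < z) : excess s w = w.length :=
  countP_eq_length.2 fun z hz => by simpa using h z hz

lemma excess_eq_excess_add_one_of_forall_notMem_Ioo (hw : w.Nodup) (ha : a ∈ w) (hba : b < a)
    (h : ∀ z ∈ w, z ∉ Set.Ioo b a) : excess b w = excess a w + 1 := by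
  rw [excess_eq_card hw, excess_eq_card hw, ← Finset.card_insert_of_notMem (a := a) (by simp)]
  congr 1
  ext z
  have := h z
  simp only [Finset.mem_filter, mem_toFinset, Finset.mem_insert]
  constructor
  · rintro ⟨hz, hbz⟩
    rcases lt_trichotomy a z with haz | rfl | hza
    · exact Or.inr ⟨hz, haz⟩
    · exact Or.inl rfl
    · exact absurd ⟨hbz, hza⟩ (this hz)
  · rintro (rfl | ⟨hz, haz⟩)
    · exact ⟨ha, hba⟩
    · exact ⟨hz, hba.trans haz⟩

lemma excess_add_one_of_forall_le (hw : w.Nodup) (ha : a ∈ w) (h : ∀ z ∈ w, a ≤ z) :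
    excess a w + 1 = w.length := by
  have hfilter : w.toFinset.filter (a < ·) = w.toFinset.erase a := by
    ext z
    have := h z
    simp only [Finset.mem_filter, mem_toFinset, Finset.mem_erase]
    constructor
    · rintro ⟨hz, haz⟩; exact ⟨haz.ne', hz⟩
    · rintro ⟨hza, hz⟩; exact ⟨hz, lt_of_le_of_ne (this hz) (Ne.symm hza)⟩
  rw [excess_eq_card hw, hfilter, Finset.card_erase_add_one (mem_toFinset.2 ha),
    toFinset_card_of_nodup hw]

end Excess

/-- The head of a configuration: `inl (w, x)` is a first block `w` with a marked letter `x`,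
`inr w` is a bare word of `i₁` letters. -/
abbrev Head := (List ℕ × ℕ) ⊕ List ℕ

def Head.word : Head → List ℕ
  | .inl (w, _) => w
  | .inr w => w

/-- `u` is the last letter of the block that follows the head. -/
def IsAdmissible (u : ℕ) : Head → Prop
  | .inl (w, x) => w.Nodup ∧ u ∉ w ∧ w.getLastD 0 < u ∧ x ∈ w
  | .inr w => w.Nodup ∧ u ∉ w

def lowerLast (u : ℕ) : Head → Head
  | .inl (w, x) =>
    match (w.filter (· < w.getLastD 0)).max? with
    | none => .inr (w.map (Equiv.swap (w.getLastD 0) x))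
    | some b => .inl (w.map (Equiv.swap (w.getLastD 0) b), Equiv.swap (w.getLastD 0) b x)
  | .inr w =>
    match (w.filter (· < u)).max? with
    | none => .inr w
    | some m => .inl (w.map (Equiv.swap m (w.getLastD 0)), w.getLastD 0)

def raiseLast (u : ℕ) : Head → Head
  | .inl (w, y) =>
    match (w.filter fun z => w.getLastD 0 < z ∧ z < u).min? with
    | none => .inr (w.map (Equiv.swap (w.getLastD 0) y))
    | some a => .inl (w.map (Equiv.swap (w.getLastD 0) a), Equiv.swap (w.getLastD 0) a y)
  | .inr w =>
    match (w.filter (· < u)).min? with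
    | none => .inr w
    | some m => .inl (w.map (Equiv.swap m (w.getLastD 0)), w.getLastD 0)

def weightL (u : ℕ) : Head → ℕ
  | .inl (w, _) => excess (w.getLastD 0) w + 1
  | .inr w => excess u w

def weightR : Head → ℕ
  | .inl (w, _) => excess (w.getLastD 0) w
  | .inr w => w.length

section Moves

variable {u : ℕ} {c : Head}

theorem raiseLast_lowerLast (h : IsAdmissible u c) : raiseLast u (lowerLast u c) = c := by
  rcases c with ⟨w, x⟩ | w
  · obtain ⟨hw, -, hau, hx⟩ := h
    have hne := ne_nil_of_mem hx
    have ha := getLastD_mem_of_ne_nil hne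
    cases hb : (w.filter (· < w.getLastD 0)).max? with
    | none =>
      have hmin := max?_filter_eq_none_iff.1 hb
      have : ((w.map (Equiv.swap (w.getLastD 0) x)).filter (· < u)).min? = some (w.getLastD 0) := by
        rw [min?_filter_eq_some_iff]
        simp only [mem_map_swap_iff ha hx]
        exact ⟨ha, hau, fun z hz _ => not_lt.1 (hmin z hz)⟩
      simp only [lowerLast, hb, raiseLast, this, getLastD_map_of_ne_nil hne, Equiv.swap_apply_left,
        map_swap_map_swap]
    | some b =>
      obtain ⟨hbw, hba, hbmax⟩ := max?_filter_eq_some_iff.1 hb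
      have : ((w.map (Equiv.swap (w.getLastD 0) b)).filter fun z => b < z ∧ z < u).min? =
          some (w.getLastD 0) := by
        rw [min?_filter_eq_some_iff]
        simp only [mem_map_swap_iff ha hbw]
        refine ⟨ha, ⟨hba, hau⟩, fun z hz hbz => not_lt.1 fun hza => ?_⟩
        exact absurd (hbmax z hz hza) (not_le.2 hbz.1)
      simp only [lowerLast, hb, raiseLast, getLastD_map_of_ne_nil hne, Equiv.swap_apply_left, this,
        Equiv.swap_comm b, map_swap_map_swap, Equiv.swap_apply_self]
  · obtain ⟨hw, hu⟩ := h
    cases hm : (w.filter (· < u)).max? with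
    | none =>
      have : (w.filter (· < u)).min? = none := by
        rw [min?_filter_eq_none_iff]; exact max?_filter_eq_none_iff.1 hm
      simp only [lowerLast, hm, raiseLast, this]
    | some m =>
      obtain ⟨hmw, hmu, hmmax⟩ := max?_filter_eq_some_iff.1 hm
      have hne := ne_nil_of_mem hmw
      have hl := getLastD_mem_of_ne_nil hne
      have : ((w.map (Equiv.swap m (w.getLastD 0))).filter
          fun z => m < z ∧ z < u).min? = none := by
        rw [min?_filter_eq_none_iff]
        simp only [mem_map_swap_iff hmw hl]
        exact fun z hz hmz => absurd (hmmax z hz hmz.2) (not_le.2 hmz.1)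
      simp only [lowerLast, hm, raiseLast, getLastD_map_of_ne_nil hne, Equiv.swap_apply_right, this,
        map_swap_map_swap]

theorem lowerLast_raiseLast (h : IsAdmissible u c) : lowerLast u (raiseLast u c) = c := by
  rcases c with ⟨w, y⟩ | w
  · obtain ⟨hw, hu, hbu, hy⟩ := h
    have hne := ne_nil_of_mem hy
    have hb := getLastD_mem_of_ne_nil hne
    cases ha : (w.filter fun z => w.getLastD 0 < z ∧ z < u).min? with
    | none =>
      have hgap := min?_filter_eq_none_iff.1 ha
      have : ((w.map (Equiv.swap (w.getLastD 0) y)).filter (· < u)).max? = some (w.getLastD 0) := by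
        rw [max?_filter_eq_some_iff]
        simp only [mem_map_swap_iff hb hy]
        refine ⟨hb, hbu, fun z hz hzu => not_lt.1 fun hbz => hgap z hz ⟨hbz, hzu⟩⟩
      simp only [raiseLast, ha, lowerLast, this, getLastD_map_of_ne_nil hne, Equiv.swap_apply_left,
        map_swap_map_swap]
    | some a =>
      obtain ⟨haw, ⟨hba, hau⟩, hamin⟩ := min?_filter_eq_some_iff.1 ha
      have : ((w.map (Equiv.swap (w.getLastD 0) a)).filter (· < a)).max? = some (w.getLastD 0) := by
        rw [max?_filter_eq_some_iff]
        simp only [mem_map_swap_iff hb haw]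
        refine ⟨hb, hba, fun z hz hza => not_lt.1 fun hbz => ?_⟩
        exact absurd (hamin z hz ⟨hbz, hza.trans hau⟩) (not_le.2 hza)
      simp only [raiseLast, ha, lowerLast, getLastD_map_of_ne_nil hne, Equiv.swap_apply_left, this,
        Equiv.swap_comm a, map_swap_map_swap, Equiv.swap_apply_self]
  · obtain ⟨hw, hu⟩ := h
    cases hm : (w.filter (· < u)).min? with
    | none =>
      have : (w.filter (· < u)).max? = none := by
        rw [max?_filter_eq_none_iff]; exact min?_filter_eq_none_iff.1 hm
      simp only [raiseLast, hm, lowerLast, this]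
    | some m =>
      obtain ⟨hmw, hmu, hmmin⟩ := min?_filter_eq_some_iff.1 hm
      have hne := ne_nil_of_mem hmw
      have hl := getLastD_mem_of_ne_nil hne
      have : ((w.map (Equiv.swap m (w.getLastD 0))).filter (· < m)).max? = none := by
        rw [max?_filter_eq_none_iff]
        simp only [mem_map_swap_iff hmw hl]
        exact fun z hz hzm => absurd (hmmin z hz (hzm.trans hmu)) (not_le.2 hzm)
      simp only [raiseLast, hm, lowerLast, getLastD_map_of_ne_nil hne, Equiv.swap_apply_right, this,
        map_swap_map_swap]

theorem isAdmissible_lowerLast (h : IsAdmissible u c) : IsAdmissible u (lowerLast u c) := by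
  rcases c with ⟨w, x⟩ | w
  · obtain ⟨hw, hu, hau, hx⟩ := h
    have hne := ne_nil_of_mem hx
    have ha := getLastD_mem_of_ne_nil hne
    cases hb : (w.filter (· < w.getLastD 0)).max? with
    | none =>
      simp only [lowerLast, hb, IsAdmissible, mem_map_swap_iff ha hx]
      exact ⟨hw.map (Equiv.injective _), hu⟩
    | some b =>
      obtain ⟨hbw, hba, -⟩ := max?_filter_eq_some_iff.1 hb
      simp only [lowerLast, hb, IsAdmissible, mem_map_swap_iff ha hbw, getLastD_map_of_ne_nil hne,
        Equiv.swap_apply_left]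
      exact ⟨hw.map (Equiv.injective _), hu, hba.trans hau, (swap_apply_mem_iff ha hbw).2 hx⟩
  · obtain ⟨hw, hu⟩ := h
    cases hm : (w.filter (· < u)).max? with
    | none => simpa only [lowerLast, hm, IsAdmissible] using And.intro hw hu
    | some m =>
      obtain ⟨hmw, hmu, -⟩ := max?_filter_eq_some_iff.1 hm
      have hl := getLastD_mem_of_ne_nil (ne_nil_of_mem hmw)
      simp only [lowerLast, hm, IsAdmissible, mem_map_swap_iff hmw hl,
        getLastD_map_of_ne_nil (ne_nil_of_mem hmw), Equiv.swap_apply_right]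
      exact ⟨hw.map (Equiv.injective _), hu, hmu, hl⟩

theorem isAdmissible_raiseLast (h : IsAdmissible u c) : IsAdmissible u (raiseLast u c) := by
  rcases c with ⟨w, y⟩ | w
  · obtain ⟨hw, hu, -, hy⟩ := h
    have hne := ne_nil_of_mem hy
    have hb := getLastD_mem_of_ne_nil hne
    cases ha : (w.filter fun z => w.getLastD 0 < z ∧ z < u).min? with
    | none =>
      simp only [raiseLast, ha, IsAdmissible, mem_map_swap_iff hb hy]
      exact ⟨hw.map (Equiv.injective _), hu⟩
    | some a =>
      obtain ⟨haw, ⟨-, hau⟩, -⟩ := min?_filter_eq_some_iff.1 ha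
      simp only [raiseLast, ha, IsAdmissible, mem_map_swap_iff hb haw, getLastD_map_of_ne_nil hne,
        Equiv.swap_apply_left]
      exact ⟨hw.map (Equiv.injective _), hu, hau, (swap_apply_mem_iff hb haw).2 hy⟩
  · obtain ⟨hw, hu⟩ := h
    cases hm : (w.filter (· < u)).min? with
    | none => simpa only [raiseLast, hm, IsAdmissible] using And.intro hw hu
    | some m =>
      obtain ⟨hmw, hmu, -⟩ := min?_filter_eq_some_iff.1 hm
      have hl := getLastD_mem_of_ne_nil (ne_nil_of_mem hmw)
      simp only [raiseLast, hm, IsAdmissible, mem_map_swap_iff hmw hl,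
        getLastD_map_of_ne_nil (ne_nil_of_mem hmw), Equiv.swap_apply_right]
      exact ⟨hw.map (Equiv.injective _), hu, hmu, hl⟩

theorem word_lowerLast_perm (h : IsAdmissible u c) : (lowerLast u c).word ~ c.word := by
  rcases c with ⟨w, x⟩ | w
  · obtain ⟨hw, -, -, hx⟩ := h
    have ha := getLastD_mem_of_ne_nil (ne_nil_of_mem hx)
    cases hb : (w.filter (· < w.getLastD 0)).max? with
    | none => simpa only [lowerLast, hb, Head.word] using perm_map_swap hw ha hx
    | some b =>
      simpa only [lowerLast, hb, Head.word] using
        perm_map_swap hw ha (max?_filter_eq_some_iff.1 hb).1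
  · obtain ⟨hw, -⟩ := h
    cases hm : (w.filter (· < u)).max? with
    | none => simp only [lowerLast, hm, Perm.refl]
    | some m =>
      have hmw := (max?_filter_eq_some_iff.1 hm).1
      simpa only [lowerLast, hm, Head.word] using
        perm_map_swap hw hmw (getLastD_mem_of_ne_nil (ne_nil_of_mem hmw))

theorem weightR_lowerLast (h : IsAdmissible u c) : weightR (lowerLast u c) = weightL u c := by
  rcases c with ⟨w, x⟩ | w
  · obtain ⟨hw, -, -, hx⟩ := h
    have hne := ne_nil_of_mem hx
    have ha := getLastD_mem_of_ne_nil hne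
    cases hb : (w.filter (· < w.getLastD 0)).max? with
    | none =>
      have hmin := max?_filter_eq_none_iff.1 hb
      simp only [lowerLast, hb, weightR, weightL, length_map]
      exact (excess_add_one_of_forall_le hw ha fun z hz => not_lt.1 (hmin z hz)).symm
    | some b =>
      obtain ⟨hbw, hba, hbmax⟩ := max?_filter_eq_some_iff.1 hb
      simp only [lowerLast, hb, weightR, weightL, getLastD_map_of_ne_nil hne, Equiv.swap_apply_left]
      rw [excess_map_swap hw ha hbw]
      exact excess_eq_excess_add_one_of_forall_notMem_Ioo hw ha hba fun z hz hbz =>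
        absurd (hbmax z hz hbz.2) (not_le.2 hbz.1)
  · obtain ⟨hw, hu⟩ := h
    cases hm : (w.filter (· < u)).max? with
    | none =>
      simp only [lowerLast, hm, weightR, weightL]
      refine (excess_eq_length_of_forall_lt fun z hz => ?_).symm
      have := max?_filter_eq_none_iff.1 hm z hz
      exact lt_of_le_of_ne (not_lt.1 this) (fun h => hu (h ▸ hz))
    | some m =>
      obtain ⟨hmw, hmu, hmmax⟩ := max?_filter_eq_some_iff.1 hm
      have hne := ne_nil_of_mem hmw
      simp only [lowerLast, hm, weightR, weightL, getLastD_map_of_ne_nil hne,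
        Equiv.swap_apply_right]
      rw [excess_map_swap hw hmw (getLastD_mem_of_ne_nil hne)]
      refine excess_eq_excess_of_forall_notMem_Ioc hmu.le fun z hz ⟨hmz, hzu⟩ => ?_
      rcases hzu.lt_or_eq with hzu | rfl
      · exact absurd (hmmax z hz hzu) (not_le.2 hmz)
      · exact hu hz

end Moves

structure IsPermutitionOn (C : Finset ℕ) (L : List (List ℕ)) : Prop where
  ne_nil : ∀ B ∈ L, B ≠ []
  nodup : L.flatten.Nodup
  mem_iff : ∀ x, x ∈ L.flatten ↔ x ∈ C
  isChain : (L.map fun B => B.getLastD 0).IsChain (· < ·)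

theorem isPermutition_iff {n : ℕ} {L : List (List ℕ)} :
    IsPermutition n L ↔ IsPermutitionOn (Finset.Icc 1 n) L :=
  ⟨fun ⟨h₁, h₂, h₃, h₄⟩ => ⟨h₁, h₂, by simpa using h₃, h₄⟩,
    fun ⟨h₁, h₂, h₃, h₄⟩ => ⟨h₁, h₂, by simpa using h₃, h₄⟩⟩

def headLast (M : List (List ℕ)) : ℕ := (M.headD []).getLastD 0

theorem isPermutitionOn_cons_iff {C : Finset ℕ} {B : List ℕ} {M : List (List ℕ)} :
    IsPermutitionOn C (B :: M) ↔
      B ≠ [] ∧ B.Nodup ∧ (∀ x ∈ B, x ∈ C) ∧ IsPermutitionOn (C \ B.toFinset) M ∧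
        (M ≠ [] → B.getLastD 0 < headLast M) := by
  have hchain : ((B :: M).map fun B => B.getLastD 0).IsChain (· < ·) ↔
      (M ≠ [] → B.getLastD 0 < headLast M) ∧ (M.map fun B => B.getLastD 0).IsChain (· < ·) := by
    cases M <;> simp [headLast]
  constructor
  · rintro ⟨hne, hnd, hmem, hch⟩
    rw [flatten_cons, nodup_append] at hnd
    refine ⟨hne B mem_cons_self, hnd.1, fun x hx => (hmem x).1 (by simp [hx]),
      ⟨fun B' hB' => hne B' (mem_cons_of_mem _ hB'), hnd.2.1, fun x => ?_, (hchain.1 hch).2⟩,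
      (hchain.1 hch).1⟩
    rw [Finset.mem_sdiff, mem_toFinset, ← hmem, flatten_cons, mem_append]
    exact ⟨fun hx => ⟨Or.inr hx, fun hxB => hnd.2.2 x hxB x hx rfl⟩,
      fun ⟨hx, hxB⟩ => hx.resolve_left hxB⟩
  · rintro ⟨hB, hBnd, hBC, ⟨hne, hnd, hmem, hch⟩, hlast⟩
    refine ⟨?_, ?_, fun x => ?_, hchain.2 ⟨hlast, hch⟩⟩
    · simpa [hB] using hne
    · rw [flatten_cons, nodup_append]
      exact ⟨hBnd, hnd, fun x hx y hy hxy => by simp_all⟩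
    · rw [flatten_cons, mem_append, hmem, Finset.mem_sdiff, mem_toFinset]
      by_cases hx : x ∈ B <;> simp [hx, hBC]

theorem isPermutitionOn_append_cons_iff {C : Finset ℕ} {w B : List ℕ} {T : List (List ℕ)}
    (hB : B ≠ []) :
    IsPermutitionOn C ((w ++ B) :: T) ↔
      w.Nodup ∧ (∀ x ∈ w, x ∈ C) ∧ IsPermutitionOn (C \ w.toFinset) (B :: T) := by
  rw [isPermutitionOn_cons_iff, isPermutitionOn_cons_iff, getLastD_append_of_ne_nil hB,
    toFinset_append, ← Finset.sup_eq_union, ← sdiff_sdiff_left, nodup_append]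
  simp only [Finset.mem_sdiff, mem_toFinset, mem_append, ne_eq, append_eq_nil_iff, hB,
    and_false, not_false_eq_true, true_and]
  constructor
  · rintro ⟨⟨hw, hBnd, hdisj⟩, hC, hT, hlast⟩
    exact ⟨hw, fun x hx => hC x (Or.inl hx), hBnd,
      fun x hx => ⟨hC x (Or.inr hx), fun hxw => hdisj x hxw x hx rfl⟩, hT, hlast⟩
  · rintro ⟨hw, hwC, hBnd, hBC, hT, hlast⟩
    exact ⟨⟨hw, hBnd, fun x hx y hy hxy => (hBC y hy).2 (hxy ▸ hx)⟩,
      fun x hx => hx.elim (hwC x) fun h => (hBC x h).1, hT, hlast⟩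

lemma IsPermutitionOn.headLast_mem {C : Finset ℕ} {M : List (List ℕ)} (hM : IsPermutitionOn C M)
    (hne : M ≠ []) : headLast M ∈ C := by
  obtain ⟨B, T, rfl⟩ := exists_cons_of_ne_nil hne
  exact (hM.mem_iff _).1
    (mem_flatten.2 ⟨B, mem_cons_self, getLastD_mem_of_ne_nil (hM.ne_nil B mem_cons_self)⟩)

lemma shape_eq_cons_iff {L : List (List ℕ)} {k : ℕ} {K : List ℕ} :
    shape L = k :: K ↔ ∃ B T, L = B :: T ∧ B.length = k ∧ shape T = K := by
  cases L <;> simp [shape]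

lemma card_Icc_sdiff_toFinset {n : ℕ} {w : List ℕ} (hw : w.Nodup) (hwC : ∀ x ∈ w, x ∈ Finset.Icc 1 n) :
    (Finset.Icc 1 n \ w.toFinset).card = n - w.length := by
  rw [Finset.card_sdiff_of_subset fun x hx => hwC x (mem_toFinset.1 hx),
    toFinset_card_of_nodup hw, Nat.card_Icc, Nat.add_sub_cancel]

def relabel (f : ℕ → ℕ) (L : List (List ℕ)) : List (List ℕ) := L.map (List.map f)

section Relabel

variable {f g : ℕ → ℕ} {C C' : Finset ℕ} {L : List (List ℕ)}

@[simp] lemma shape_relabel : shape (relabel f L) = shape L := by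
  simp [shape, relabel, Function.comp_def]

lemma relabel_relabel (h : ∀ x ∈ L.flatten, g (f x) = x) : relabel g (relabel f L) = L := by
  rw [relabel, relabel, map_map]
  refine (map_congr_left fun B hB => ?_).trans (map_id L)
  rw [Function.comp_apply, map_map]
  exact (map_congr_left fun x hx => h x (mem_flatten.2 ⟨B, hB, hx⟩)).trans (map_id B)

theorem IsPermutitionOn.relabel (hL : IsPermutitionOn C L) (hf : StrictMonoOn f C)
    (hC : C.image f = C') : IsPermutitionOn C' (relabel f L) := by
  refine ⟨?_, ?_, fun x => ?_, ?_⟩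
  · simpa [Permutition.relabel] using hL.ne_nil
  · rw [Permutition.relabel, ← map_flatten]
    exact hL.nodup.map_on fun x hx y hy => hf.injOn
      ((hL.mem_iff x).1 hx) ((hL.mem_iff y).1 hy)
  · simp [Permutition.relabel, ← map_flatten, hL.mem_iff, ← hC]
  · have hlast : ∀ B ∈ L, B.getLastD 0 ∈ (C : Set ℕ) := fun B hB => (hL.mem_iff _).1
      (mem_flatten.2 ⟨B, hB, getLastD_mem_of_ne_nil (hL.ne_nil B hB)⟩)
    have hmap : (Permutition.relabel f L).map (fun B => B.getLastD 0) =
        (L.map fun B => B.getLastD 0).map f := by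
      simp only [Permutition.relabel, map_map]
      exact map_congr_left fun B hB => getLastD_map_of_ne_nil (hL.ne_nil B hB)
    rw [hmap, isChain_map, IsChain.iff_mem]
    refine (IsChain.iff_mem.1 hL.isChain).imp fun a b ⟨ha, hb, hab⟩ => ⟨ha, hb, ?_⟩
    obtain ⟨A, hA, rfl⟩ := mem_map.1 ha
    obtain ⟨B, hB, rfl⟩ := mem_map.1 hb
    exact hf (hlast A hA) (hlast B hB) hab

theorem sinv_relabel (hL : IsPermutitionOn C L) (hf : StrictMonoOn f C) :
    sinv (relabel f L) = sinv L := by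
  simp only [sinv, Permutition.relabel, map_map]
  congr 1
  refine map_congr_left fun B hB => ?_
  have hsub : ∀ x ∈ B, x ∈ (C : Set ℕ) := fun x hx =>
    Finset.mem_coe.2 ((hL.mem_iff x).1 (mem_flatten.2 ⟨B, hB, hx⟩))
  have hne := hL.ne_nil B hB
  simp only [Function.comp_apply, getLastD_map_of_ne_nil hne, countP_map]
  refine countP_congr fun x hx => ?_
  simp only [Function.comp_apply, decide_eq_true_eq]
  exact hf.lt_iff_lt (hsub _ (getLastD_mem_of_ne_nil hne)) (hsub x hx)

end Relabel

def rank (C : Finset ℕ) (x : ℕ) : ℕ := Nat.count (· ∈ C) x + 1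

noncomputable def unrank (C : Finset ℕ) (j : ℕ) : ℕ := Nat.nth (· ∈ C) (j - 1)

section Rank

variable {C : Finset ℕ} {x j : ℕ}

lemma toFinset_ofPred_mem (h : (Set.ofPred (· ∈ C)).Finite) : h.toFinset = C := by
  simp

lemma strictMonoOn_rank : StrictMonoOn (rank C) C := fun _ hx _ _ hxy =>
  Nat.succ_lt_succ (Nat.count_strict_mono hx hxy)

lemma rank_mem_Icc (hx : x ∈ C) : rank C x ∈ Finset.Icc 1 C.card := by
  have := Nat.count_lt_card (p := (· ∈ C)) C.finite_toSet hx
  rw [toFinset_ofPred_mem] at this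
  simp only [rank, Finset.mem_Icc]
  omega

lemma unrank_rank (hx : x ∈ C) : unrank C (rank C x) = x := by
  simpa [rank, unrank] using Nat.nth_count hx

lemma unrank_mem (hj : j ∈ Finset.Icc 1 C.card) : unrank C j ∈ C := by
  rw [Finset.mem_Icc] at hj
  exact Nat.nth_mem_of_lt_card (p := (· ∈ C)) C.finite_toSet (by rw [toFinset_ofPred_mem]; omega)

lemma rank_unrank (hj : j ∈ Finset.Icc 1 C.card) : rank C (unrank C j) = j := by
  rw [Finset.mem_Icc] at hj
  rw [rank, unrank, Nat.count_nth_of_lt_card_finite (p := (· ∈ C)) C.finite_toSet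
    (by rw [toFinset_ofPred_mem]; omega)]
  omega

lemma image_rank : C.image (rank C) = Finset.Icc 1 C.card := by
  ext j
  simp only [Finset.mem_image]
  exact ⟨fun ⟨x, hx, hxj⟩ => hxj ▸ rank_mem_Icc hx,
    fun hj => ⟨unrank C j, unrank_mem hj, rank_unrank hj⟩⟩

lemma image_unrank : (Finset.Icc 1 C.card).image (unrank C) = C := by
  ext x
  simp only [Finset.mem_image]
  exact ⟨fun ⟨j, hj, hjx⟩ => hjx ▸ unrank_mem hj,
    fun hx => ⟨rank C x, rank_mem_Icc hx, unrank_rank hx⟩⟩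

lemma strictMonoOn_unrank : StrictMonoOn (unrank C) (Finset.Icc 1 C.card) := by
  intro i hi j hj hij
  rw [← strictMonoOn_rank.lt_iff_lt (unrank_mem hi) (unrank_mem hj), rank_unrank hi,
    rank_unrank hj]
  exact hij

end Rank

-- `abbrev`, so that `{p // E₁ n i₁ i₂ J p}` and the subtypes in `exists_sinv_bijection` agree
-- up to reducible unfolding.
abbrev E₁ (n i₁ i₂ : ℕ) (J : List ℕ) (p : List (List ℕ) × ℕ) : Prop :=
  IsPermutition n p.1 ∧ shape p.1 = i₁ :: i₂ :: J ∧ p.2 ∈ p.1.headD []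

abbrev E₂ (n i₁ i₂ : ℕ) (J : List ℕ) (L : List (List ℕ)) : Prop :=
  IsPermutition n L ∧ shape L = (i₁ + i₂) :: J

abbrev E₃ (n i₁ i₂ : ℕ) (J : List ℕ) (p : List (List ℕ) × List ℕ) : Prop :=
  IsPermutition (n - i₁) p.1 ∧ shape p.1 = i₂ :: J ∧ p.2.length = i₁ ∧ p.2.Nodup ∧
    ∀ x ∈ p.2, 1 ≤ x ∧ x ≤ n

structure IsConfig (n i₁ i₂ : ℕ) (J : List ℕ) (p : Head × List (List ℕ)) : Prop where
  admissible : IsAdmissible (headLast p.2) p.1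
  length_word : p.1.word.length = i₁
  word_mem : ∀ x ∈ p.1.word, x ∈ Finset.Icc 1 n
  rest : IsPermutitionOn (Finset.Icc 1 n \ p.1.word.toFinset) p.2
  shape_rest : shape p.2 = i₂ :: J

section Configurations

variable {n i₁ i₂ : ℕ} {J : List ℕ}

theorem isConfig_of_E₁ {L : List (List ℕ)} {x : ℕ} (h : E₁ n i₁ i₂ J (L, x)) :
    IsConfig n i₁ i₂ J (.inl (L.headD [], x), L.tail) := by
  obtain ⟨hL, hshape, hx⟩ := h
  obtain ⟨B, M, rfl, hB, hMshape⟩ := shape_eq_cons_iff.1 hshape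
  obtain ⟨-, hBnd, hBC, hM, hlast⟩ := isPermutitionOn_cons_iff.1 (isPermutition_iff.1 hL)
  have hMne : M ≠ [] := by rintro rfl; simp [shape] at hMshape
  refine ⟨⟨hBnd, fun hu => ?_, hlast hMne, hx⟩, hB, hBC, hM, hMshape⟩
  exact (Finset.mem_sdiff.1 (hM.headLast_mem hMne)).2 (mem_toFinset.2 hu)

theorem E₁_of_isConfig {w : List ℕ} {M : List (List ℕ)} {x : ℕ}
    (h : IsConfig n i₁ i₂ J (.inl (w, x), M)) :
    E₁ n i₁ i₂ J (w :: M, x) := by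
  obtain ⟨⟨hw, -, hlast, hx⟩, hlen, hwC, hM, hshape⟩ := h
  refine ⟨isPermutition_iff.2 (isPermutitionOn_cons_iff.2
    ⟨ne_nil_of_mem hx, hw, hwC, hM, fun _ => hlast⟩), ?_, hx⟩
  simp only [Head.word] at hlen
  simp [shape, ← hshape, hlen]

theorem isConfig_of_E₂ (h₂ : 0 < i₂) {L : List (List ℕ)} (h : E₂ n i₁ i₂ J L) :
    IsConfig n i₁ i₂ J (.inr ((L.headD []).take i₁), (L.headD []).drop i₁ :: L.tail) := by
  obtain ⟨hL, hshape⟩ := h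
  obtain ⟨B, T, rfl, hB, hT⟩ := shape_eq_cons_iff.1 hshape
  have hdrop : B.drop i₁ ≠ [] := by
    rw [← length_pos_iff, length_drop]; omega
  rw [isPermutition_iff, ← take_append_drop i₁ B, isPermutitionOn_append_cons_iff hdrop] at hL
  obtain ⟨hw, hwC, hM⟩ := hL
  refine ⟨⟨hw, fun hu => ?_⟩, ?_, hwC, hM, ?_⟩
  · exact (Finset.mem_sdiff.1 (hM.headLast_mem (cons_ne_nil _ _))).2 (mem_toFinset.2 hu)
  · simp only [Head.word, headD_cons, length_take]; omega
  · simp only [shape, map_cons, length_drop, hB, headD_cons, tail_cons, ← hT]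
    congr 1; omega

theorem E₂_of_isConfig {w : List ℕ} {M : List (List ℕ)}
    (h : IsConfig n i₁ i₂ J (.inr w, M)) : E₂ n i₁ i₂ J ((w ++ M.headD []) :: M.tail) := by
  obtain ⟨⟨hw, -⟩, hlen, hwC, hM, hshape⟩ := h
  obtain ⟨B, T, rfl, hB, hT⟩ := shape_eq_cons_iff.1 hshape
  simp only [Head.word] at hlen hwC hM
  refine ⟨isPermutition_iff.2 ((isPermutitionOn_append_cons_iff (hM.ne_nil B mem_cons_self)).2
    ⟨hw, hwC, hM⟩), ?_⟩
  simp [shape, hlen, hB, ← hT]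

theorem isConfig_of_E₃ {π : List (List ℕ)} {w : List ℕ} (h : E₃ n i₁ i₂ J (π, w)) :
    IsConfig n i₁ i₂ J (.inr w, relabel (unrank (Finset.Icc 1 n \ w.toFinset)) π) := by
  obtain ⟨hπ, hshape, hlen, hw, hwn⟩ := h
  have hwC : ∀ x ∈ w, x ∈ Finset.Icc 1 n := by simpa using hwn
  have hcard := card_Icc_sdiff_toFinset hw hwC
  rw [isPermutition_iff, ← hlen, ← hcard] at hπ
  have hM := hπ.relabel strictMonoOn_unrank image_unrank
  have hne : relabel (unrank (Finset.Icc 1 n \ w.toFinset)) π ≠ [] := by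
    rw [← length_pos_iff, ← length_map (f := List.length), ← shape, shape_relabel, hshape]
    exact Nat.succ_pos _
  refine ⟨⟨hw, fun hu => ?_⟩, hlen, hwC, hM, by rw [shape_relabel, hshape]⟩
  exact (Finset.mem_sdiff.1 (hM.headLast_mem hne)).2 (mem_toFinset.2 hu)

theorem E₃_of_isConfig {w : List ℕ} {M : List (List ℕ)}
    (h : IsConfig n i₁ i₂ J (.inr w, M)) :
    E₃ n i₁ i₂ J (relabel (rank (Finset.Icc 1 n \ w.toFinset)) M, w) := by
  obtain ⟨⟨hw, -⟩, hlen, hwC, hM, hshape⟩ := h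
  simp only [Head.word] at hlen hwC hM
  have hπ := hM.relabel strictMonoOn_rank image_rank
  rw [card_Icc_sdiff_toFinset hw hwC, hlen] at hπ
  exact ⟨isPermutition_iff.2 hπ, by rw [shape_relabel, hshape], hlen, hw, by simpa using hwC⟩

def splitSource (i₁ : ℕ) : (List (List ℕ) × ℕ) ⊕ List (List ℕ) → Head × List (List ℕ)
  | .inl (L, x) => (.inl (L.headD [], x), L.tail)
  | .inr L => (.inr ((L.headD []).take i₁), (L.headD []).drop i₁ :: L.tail)

def joinSource : Head × List (List ℕ) → (List (List ℕ) × ℕ) ⊕ List (List ℕ)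
  | (.inl (w, x), M) => .inl (w :: M, x)
  | (.inr w, M) => .inr ((w ++ M.headD []) :: M.tail)

noncomputable def splitTarget (n : ℕ) :
    (List (List ℕ) × ℕ) ⊕ (List (List ℕ) × List ℕ) → Head × List (List ℕ)
  | .inl (L, x) => (.inl (L.headD [], x), L.tail)
  | .inr (π, w) => (.inr w, relabel (unrank (Finset.Icc 1 n \ w.toFinset)) π)

def joinTarget (n : ℕ) :
    Head × List (List ℕ) → (List (List ℕ) × ℕ) ⊕ (List (List ℕ) × List ℕ)
  | (.inl (w, x), M) => .inl (w :: M, x)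
  | (.inr w, M) => .inr (relabel (rank (Finset.Icc 1 n \ w.toFinset)) M, w)

def lowerHead (p : Head × List (List ℕ)) : Head × List (List ℕ) :=
  (lowerLast (headLast p.2) p.1, p.2)

def raiseHead (p : Head × List (List ℕ)) : Head × List (List ℕ) :=
  (raiseLast (headLast p.2) p.1, p.2)

theorem joinSource_splitSource {e : (List (List ℕ) × ℕ) ⊕ List (List ℕ)}
    (he : Sum.elim (E₁ n i₁ i₂ J) (E₂ n i₁ i₂ J) e) : joinSource (splitSource i₁ e) = e := by
  rcases e with ⟨L, x⟩ | L
  · obtain ⟨B, M, rfl, -⟩ := shape_eq_cons_iff.1 he.2.1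
    rfl
  · obtain ⟨B, T, rfl, -⟩ := shape_eq_cons_iff.1 he.2
    simp [splitSource, joinSource]

theorem bijOn_splitSource (h₂ : 0 < i₂) :
    Set.BijOn (splitSource i₁) {e | Sum.elim (E₁ n i₁ i₂ J) (E₂ n i₁ i₂ J) e}
      {p | IsConfig n i₁ i₂ J p} := by
  refine Set.InvOn.bijOn (f' := joinSource) ⟨fun e he => joinSource_splitSource he, fun p hp => ?_⟩
    (fun e he => ?_) (fun p hp => ?_)
  · rcases p with ⟨⟨w, x⟩ | w, M⟩
    · rfl
    · obtain ⟨B, T, rfl, -⟩ := shape_eq_cons_iff.1 hp.shape_rest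
      have hlen : w.length = i₁ := hp.length_word
      simp [splitSource, joinSource, ← hlen]
  · rcases e with ⟨L, x⟩ | L
    · exact isConfig_of_E₁ he
    · exact isConfig_of_E₂ h₂ he
  · rcases p with ⟨⟨w, x⟩ | w, M⟩
    · exact E₁_of_isConfig hp
    · exact E₂_of_isConfig hp

theorem bijOn_joinTarget :
    Set.BijOn (joinTarget n) {p | IsConfig n i₁ i₂ J p}
      {e | Sum.elim (E₁ n i₁ i₂ J) (E₃ n i₁ i₂ J) e} := by
  refine Set.InvOn.bijOn (f' := splitTarget n) ⟨fun p hp => ?_, fun e he => ?_⟩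
    (fun p hp => ?_) (fun e he => ?_)
  · rcases p with ⟨⟨w, x⟩ | w, M⟩
    · rfl
    · simp only [joinTarget, splitTarget, Prod.mk.injEq, true_and]
      exact relabel_relabel fun x hx => unrank_rank ((hp.rest.mem_iff x).1 hx)
  · rcases e with ⟨L, x⟩ | ⟨π, w⟩
    · obtain ⟨B, M, rfl, -⟩ := shape_eq_cons_iff.1 he.2.1
      rfl
    · have hp := isConfig_of_E₃ he
      simp only [splitTarget, joinTarget, Sum.inr.injEq, Prod.mk.injEq, and_true]
      refine relabel_relabel fun x hx => rank_unrank ?_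
      rw [card_Icc_sdiff_toFinset he.2.2.2.1 (by simpa using he.2.2.2.2), he.2.2.1]
      exact (isPermutition_iff.1 he.1).mem_iff x |>.1 hx
  · rcases p with ⟨⟨w, x⟩ | w, M⟩
    · exact E₁_of_isConfig hp
    · exact E₃_of_isConfig hp
  · rcases e with ⟨L, x⟩ | ⟨π, w⟩
    · exact isConfig_of_E₁ he
    · exact isConfig_of_E₃ he

theorem IsConfig.of_perm {c c' : Head} {M : List (List ℕ)} (h : IsConfig n i₁ i₂ J (c, M))
    (hc' : IsAdmissible (headLast M) c') (hperm : c'.word ~ c.word) :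
    IsConfig n i₁ i₂ J (c', M) where
  admissible := hc'
  length_word := hperm.length_eq.trans h.length_word
  word_mem x hx := h.word_mem x (hperm.subset hx)
  rest := toFinset_eq_of_perm _ _ hperm ▸ h.rest
  shape_rest := h.shape_rest

theorem bijOn_lowerHead :
    Set.BijOn lowerHead {p | IsConfig n i₁ i₂ J p} {p | IsConfig n i₁ i₂ J p} := by
  refine Set.InvOn.bijOn (f' := raiseHead)
    ⟨fun p hp => Prod.ext (raiseLast_lowerLast hp.admissible) rfl,
      fun p hp => Prod.ext (lowerLast_raiseLast hp.admissible) rfl⟩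
    (fun p hp => hp.of_perm (isAdmissible_lowerLast hp.admissible)
      (word_lowerLast_perm hp.admissible))
    (fun p hp => hp.of_perm (isAdmissible_raiseLast hp.admissible) ?_)
  have := word_lowerLast_perm (isAdmissible_raiseLast hp.admissible)
  rw [lowerLast_raiseLast hp.admissible] at this
  exact this.symm

def sourceWeight : (List (List ℕ) × ℕ) ⊕ List (List ℕ) → ℕ
  | .inl (τ, _) => sinv τ + 1
  | .inr τ => sinv τ

def targetWeight (i₁ : ℕ) : (List (List ℕ) × ℕ) ⊕ (List (List ℕ) × List ℕ) → ℕ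
  | .inl (π, _) => sinv π
  | .inr (π, _) => sinv π + i₁

theorem sourceWeight_joinSource {p : Head × List (List ℕ)} (hp : IsConfig n i₁ i₂ J p) :
    sourceWeight (joinSource p) = weightL (headLast p.2) p.1 + sinv p.2 := by
  rcases p with ⟨⟨w, x⟩ | w, M⟩
  · simp only [joinSource, sourceWeight, weightL, sinv_cons]
    omega
  · obtain ⟨B, T, rfl, -⟩ := shape_eq_cons_iff.1 hp.shape_rest
    simp only [joinSource, sourceWeight, weightL, headD_cons, tail_cons, sinv_cons, headLast,
      getLastD_append_of_ne_nil (hp.rest.ne_nil B mem_cons_self), excess_append]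
    omega

theorem targetWeight_joinTarget {p : Head × List (List ℕ)} (hp : IsConfig n i₁ i₂ J p) :
    targetWeight i₁ (joinTarget n p) = weightR p.1 + sinv p.2 := by
  rcases p with ⟨⟨w, x⟩ | w, M⟩
  · simp [joinTarget, targetWeight, weightR, sinv_cons]
  · have hM : IsPermutitionOn (Finset.Icc 1 n \ w.toFinset) M := hp.rest
    have hlen : w.length = i₁ := hp.length_word
    simp only [joinTarget, targetWeight, weightR, sinv_relabel hM strictMonoOn_rank, hlen]
    omega

theorem exists_equiv_targetWeight_eq (h₂ : 0 < i₂) :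
    ∃ φ : {p // E₁ n i₁ i₂ J p} ⊕ {L // E₂ n i₁ i₂ J L} ≃
        {p // E₁ n i₁ i₂ J p} ⊕ {p // E₃ n i₁ i₂ J p},
      ∀ e, targetWeight i₁ (Sum.map (↑) (↑) (φ e)) = sourceWeight (Sum.map (↑) (↑) e) := by
  obtain ⟨φ, hφ⟩ :=
    ((bijOn_joinTarget.comp bijOn_lowerHead).comp (bijOn_splitSource h₂)).exists_sumEquiv
  refine ⟨φ, fun e => ?_⟩
  have he : Sum.elim (E₁ n i₁ i₂ J) (E₂ n i₁ i₂ J) (Sum.map (↑) (↑) e) := by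
    rcases e with ⟨_, h⟩ | ⟨_, h⟩ <;> exact h
  have hp := (bijOn_splitSource h₂).mapsTo he
  rw [hφ e, Function.comp_apply, Function.comp_apply,
    targetWeight_joinTarget (bijOn_lowerHead.mapsTo hp), lowerHead,
    weightR_lowerLast hp.admissible, ← sourceWeight_joinSource hp, joinSource_splitSource he]

end Configurations

end Permutition

theorem exists_sinv_bijection
    (n i₁ i₂ : ℕ) (J : List ℕ) (h₁ : 0 < i₁) (h₂ : 0 < i₂) :
    ∃ φ :
      ({p : List (List ℕ) × ℕ //
          IsPermutition n p.1 ∧ shape p.1 = i₁ :: i₂ :: J ∧ p.2 ∈ p.1.headD []} ⊕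
        {L : List (List ℕ) // IsPermutition n L ∧ shape L = (i₁ + i₂) :: J}) ≃
      ({p : List (List ℕ) × ℕ //
          IsPermutition n p.1 ∧ shape p.1 = i₁ :: i₂ :: J ∧ p.2 ∈ p.1.headD []} ⊕
        {p : List (List ℕ) × List ℕ //
          IsPermutition (n - i₁) p.1 ∧ shape p.1 = i₂ :: J ∧
            p.2.length = i₁ ∧ p.2.Nodup ∧ ∀ x ∈ p.2, 1 ≤ x ∧ x ≤ n}),
      ∀ e, (match e, φ e with
        | Sum.inl τ, Sum.inl π => sinv π.1.1 = sinv τ.1.1 + 1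
        | Sum.inl τ, Sum.inr π => sinv τ.1.1 = sinv π.1.1 + (i₁ - 1)
        | Sum.inr τ, Sum.inl π => sinv π.1.1 = sinv τ.1
        | Sum.inr τ, Sum.inr π => sinv τ.1 = sinv π.1.1 + i₁) := by
  obtain ⟨φ, hφ⟩ := Permutition.exists_equiv_targetWeight_eq (n := n) (i₁ := i₁) (J := J) h₂
  refine ⟨φ, fun e => ?_⟩
  have h := hφ e
  generalize φ e = y at h ⊢
  rcases e with ⟨⟨τ, _⟩, _⟩ | ⟨τ, _⟩ <;> rcases y with ⟨⟨π, _⟩, _⟩ | ⟨⟨π, _⟩, _⟩ <;>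
    simp only [Sum.map_inl, Sum.map_inr, Permutition.sourceWeight, Permutition.targetWeight]
      at h ⊢ <;> omega
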